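/- Let α, α̃, c ∈ ℝ^g be vectors and β, β̃ ∈ ℝ be scalars, and set Δα = α − α̃, Δβ = β − β̃, k̃ = ‖α̃ + β̃·1_g − c‖₂, and õ = ‖[α̃ + β̃·1_g − c]_−‖₂. Then ‖[α + β·1_g − c]_+‖₂ ≥ k̃ − ‖Δα‖₂ − √g·|Δβ| − õ − ‖[Δα]_−‖₂ − √g·|min(Δβ, 0)|. -/

import Mathlib

open scoped RealInnerProductSpace

/-- Componentwise positive part `[x]₊ i = max (x i) 0`. -/
noncomputable def posPart {g : ℕ} (x : EuclideanSpace ℝ (Fin g)) : EuclideanSpace ℝ (Fin g) :=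
  WithLp.toLp 2 (fun i => max (x i) 0)

/-- Componentwise negative part `[x]₋ i = min (x i) 0`. -/
noncomputable def negPart {g : ℕ} (x : EuclideanSpace ℝ (Fin g)) : EuclideanSpace ℝ (Fin g) :=
  WithLp.toLp 2 (fun i => min (x i) 0)

/-- The all-ones vector `1_g`. -/
noncomputable def ones (g : ℕ) : EuclideanSpace ℝ (Fin g) := WithLp.toLp 2 (fun _ => 1)

lemma norm_le_of_abs_le {g : ℕ} (u v : EuclideanSpace ℝ (Fin g))
    (h : ∀ i, |u i| ≤ |v i|) : ‖u‖ ≤ ‖v‖ := by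
  rw [EuclideanSpace.norm_eq, EuclideanSpace.norm_eq]
  apply Real.sqrt_le_sqrt
  apply Finset.sum_le_sum
  intro i _
  have := h i
  simp only [Real.norm_eq_abs]
  nlinarith [abs_nonneg (u i), abs_nonneg (v i), sq_abs (u i), sq_abs (v i)]

lemma norm_ones (g : ℕ) : ‖ones g‖ = Real.sqrt g := by
  rw [EuclideanSpace.norm_eq]
  simp [ones]

lemma decomp {g : ℕ} (x : EuclideanSpace ℝ (Fin g)) : x = posPart x + negPart x := by
  ext i
  show x i = max (x i) 0 + min (x i) 0
  rw [max_add_min, add_zero]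

lemma posPart_lipschitz {g : ℕ} (u v : EuclideanSpace ℝ (Fin g)) :
    ‖posPart u - posPart v‖ ≤ ‖u - v‖ := by
  apply norm_le_of_abs_le
  intro i
  have : (posPart u - posPart v) i = max (u i) 0 - max (v i) 0 := rfl
  rw [this]
  have h2 : (u - v) i = u i - v i := rfl
  rw [h2]
  exact abs_max_sub_max_le_abs _ _ _

/-- Lemma 4, Lower Bound. -/
theorem lower_bound (g : ℕ) (α αt c : EuclideanSpace ℝ (Fin g)) (β βt : ℝ) :
    ‖posPart (α + β • ones g - c)‖ ≥
      ‖αt + βt • ones g - c‖ - ‖α - αt‖ - Real.sqrt g * |β - βt| -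
        ‖negPart (αt + βt • ones g - c)‖ - ‖negPart (α - αt)‖ -
        Real.sqrt g * |min (β - βt) 0| := by
  set x := α + β • ones g - c with hx
  set xt := αt + βt • ones g - c with hxt
  have hdiff : x - xt = (α - αt) + (β - βt) • ones g := by
    rw [hx, hxt, sub_smul]
    abel
  have h1 : ‖x - xt‖ ≤ ‖α - αt‖ + Real.sqrt g * |β - βt| := by
    rw [hdiff]
    calc ‖(α - αt) + (β - βt) • ones g‖ ≤ ‖α - αt‖ + ‖(β - βt) • ones g‖ := norm_add_le _ _
      _ = ‖α - αt‖ + Real.sqrt g * |β - βt| := by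
          rw [norm_smul, Real.norm_eq_abs, norm_ones]; ring
  have h2 : ‖xt‖ ≤ ‖posPart xt‖ + ‖negPart xt‖ := by
    calc ‖xt‖ = ‖posPart xt + negPart xt‖ := by rw [← decomp]
      _ ≤ _ := norm_add_le _ _
  have h3 : ‖posPart xt‖ ≤ ‖posPart x‖ + ‖x - xt‖ := by
    calc ‖posPart xt‖ ≤ ‖posPart x‖ + ‖posPart xt - posPart x‖ := by
          have := norm_sub_norm_le (posPart xt) (posPart x)
          linarith [abs_le.mp (abs_norm_sub_norm_le (posPart xt) (posPart x))]
      _ ≤ ‖posPart x‖ + ‖xt - x‖ := by linarith [posPart_lipschitz xt x]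
      _ = ‖posPart x‖ + ‖x - xt‖ := by rw [norm_sub_rev]
  have h4 : (0:ℝ) ≤ ‖negPart (α - αt)‖ := norm_nonneg _
  have h5 : (0:ℝ) ≤ Real.sqrt g * |min (β - βt) 0| :=
    mul_nonneg (Real.sqrt_nonneg _) (abs_nonneg _)
  linarith
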